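/- Equivalence of conditioned loss and categorical cross-entropy: let κ_⊙ be the exactly-one formula over k variables (at least one Y_j true and no two true simultaneously), whose models are exactly the one-hot vectors. Then for any a ∈ ℝ^k and any one-hot vector y = e_j, −log P(y|a,κ_⊙) = −log(e^{a_j}/∑_l e^{a_l}), i.e., the conditioned negative log-likelihood equals the softmax cross-entropy. -/
import Mathlib


/-- Real value of a boolean output coordinate. -/
def b2r (b : Bool) : ℝ := if b then 1 else 0

/-- Exponential distribution E(y|a) = ∏ i, exp (a i * y i). -/
noncomputable def expDist {k : ℕ} (a : Fin k → ℝ) (y : Fin k → Bool) : ℝ :=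
  ∏ i, Real.exp (a i * b2r (y i))

/-- Partition function Z(a). -/
noncomputable def partZ {k : ℕ} (a : Fin k → ℝ) : ℝ := ∑ y : Fin k → Bool, expDist a y

/-- Normalized exponential probability distribution P(y|a). -/
noncomputable def probDist {k : ℕ} (a : Fin k → ℝ) (y : Fin k → Bool) : ℝ := expDist a y / partZ a

/-- Probability of a propositional formula (given by its models) P(κ|a). -/
noncomputable def probForm {k : ℕ} (a : Fin k → ℝ) (κ : (Fin k → Bool) → Bool) : ℝ :=
  ∑ y : Fin k → Bool, if κ y then probDist a y else 0

/-- Semantically conditioned distribution P(y|a,κ). -/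
noncomputable def condDist {k : ℕ} (a : Fin k → ℝ) (κ : (Fin k → Bool) → Bool)
    (y : Fin k → Bool) : ℝ := (if κ y then probDist a y else 0) / probForm a κ

/-- Componentwise thresholding inference  I_imc(a) = 1[a ≥ 0]. -/
noncomputable def threshold {k : ℕ} (a : Fin k → ℝ) : Fin k → Bool := fun i => decide (0 ≤ a i)

/-- One-hot vector e_j. -/
def oneHot {k : ℕ} (j : Fin k) : Fin k → Bool := fun i => decide (i = j)

/-- The exactly-one ("categorical") formula κ_⊙ :
   at least one variable true, and no two true simultaneously. -/
def exactlyOne {k : ℕ} (y : Fin k → Bool) : Bool :=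
  decide ((∃ j, y j = true) ∧ ∀ j l : Fin k, j < l → ¬(y j = true ∧ y l = true))

lemma expDist_oneHot {k : ℕ} (a : Fin k → ℝ) (j : Fin k) :
    expDist a (oneHot j) = Real.exp (a j) := by
  unfold expDist oneHot b2r
  rw [Fintype.prod_eq_single j]
  · simp
  · intro i hi
    simp [hi]

lemma oneHot_inj {k : ℕ} : Function.Injective (oneHot (k := k)) := by
  intro i l h
  have := congrFun h i
  simpa [oneHot] using this

lemma exactlyOne_iff {k : ℕ} (y : Fin k → Bool) :
    exactlyOne y = true ↔ ∃ j, y = oneHot j := by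
  unfold exactlyOne
  rw [decide_eq_true_iff]
  constructor
  · rintro ⟨⟨j, hj⟩, h2⟩
    refine ⟨j, funext fun i => ?_⟩
    unfold oneHot
    by_cases hij : i = j
    · simp [hij, hj]
    · simp [hij]
      by_contra hyi
      rw [Bool.not_eq_false] at hyi
      rcases lt_or_gt_of_ne hij with h | h
      · exact h2 i j h ⟨hyi, hj⟩
      · exact h2 j i h ⟨hj, hyi⟩
  · rintro ⟨j, rfl⟩
    constructor
    · exact ⟨j, by simp [oneHot]⟩
    · intro i l hil ⟨hi, hl⟩
      simp [oneHot] at hi hl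
      subst hi; subst hl; exact lt_irrefl _ hil

lemma partZ_pos {k : ℕ} (a : Fin k → ℝ) : 0 < partZ a := by
  unfold partZ
  apply Finset.sum_pos
  · intro y _
    exact Finset.prod_pos fun i _ => Real.exp_pos _
  · exact Finset.univ_nonempty

lemma probForm_exactlyOne {k : ℕ} (a : Fin k → ℝ) :
    probForm a exactlyOne = (∑ l, Real.exp (a l)) / partZ a := by
  unfold probForm
  rw [← Finset.sum_filter]
  have hfilter : Finset.univ.filter (fun y => exactlyOne (k := k) y = true)
      = Finset.univ.image oneHot := by
    ext y
    simp only [Finset.mem_filter, Finset.mem_univ, true_and, Finset.mem_image, exactlyOne_iff]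
    exact exists_congr fun j => eq_comm
  rw [hfilter, Finset.sum_image (fun i _ l _ h => oneHot_inj h)]
  simp only [probDist, expDist_oneHot]
  rw [Finset.sum_div]

theorem cond_loss_exactlyOne_is_softmax_ce {k : ℕ} (a : Fin k → ℝ) (j : Fin k) :
    -Real.log (condDist a exactlyOne (oneHot j)) =
      -Real.log (Real.exp (a j) / ∑ l, Real.exp (a l)) := by
  have hone : exactlyOne (oneHot j) = true := (exactlyOne_iff _).2 ⟨j, rfl⟩
  have hZ := partZ_pos a
  have hS : (0:ℝ) < ∑ l, Real.exp (a l) :=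
    Finset.sum_pos (fun i _ => Real.exp_pos _) ⟨j, Finset.mem_univ j⟩
  have : condDist a exactlyOne (oneHot j) = Real.exp (a j) / ∑ l, Real.exp (a l) := by
    unfold condDist
    rw [hone, if_pos rfl, probForm_exactlyOne, probDist, expDist_oneHot]
    field_simp
  rw [this]
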